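/- arXiv:0908.1733 — 5 statements merged into one kernel-verified Lean document; each statement's English description precedes it below -/
import Mathlib

section
/- For the Vervaat perpetuity with parameter β > 0, i.e., W = U^{1/β} with U uniform on (0,1), the conditional distribution of W(1+x) given W ≤ 1/(1+x) equals the unconditional distribution of W, for every x ≥ 0. -/
open MeasureTheory ProbabilityTheory Set

/-!
Put `c = 1/(1+x)` and `p = c^β`. On `(0,1)` the event `U^{1/β} ≤ c` is `U ≤ p`, and given
`U ≤ p` the uniform variable `U` is uniform on `(0,p)`, i.e. distributed as `p U`.
Since `(p t)^{1/β} (1+x) = c t^{1/β} (1+x) = t^{1/β}`, the conditional law of `W (1+x)` is the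
law of `W`.
-/

namespace ProbabilityTheory

variable {Ω α : Type*} [MeasurableSpace Ω] [MeasurableSpace α] {μ : Measure Ω}

lemma cond_congr_set {s t : Set Ω} (h : s =ᵐ[μ] t) : μ[|s] = μ[|t] := by
  rw [cond, cond, measure_congr h, Measure.restrict_congr_set h]

lemma map_cond_preimage {X : Ω → α} (hX : Measurable X) {s : Set α} (hs : MeasurableSet s) :
    (μ[|X ⁻¹' s]).map X = (μ.map X)[|s] := by
  rw [cond, cond, Measure.map_smul, Measure.restrict_map hX hs, Measure.map_apply hX hs]

end ProbabilityTheory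

lemma volume_restrict_Ioo_zero_eq_smul_map_const_mul {p : ℝ} (hp : 0 < p) :
    volume.restrict (Ioo 0 p) =
      ENNReal.ofReal p • (volume.restrict (Ioo (0 : ℝ) 1)).map (p * ·) := by
  have hpre : (p * ·) ⁻¹' Ioo 0 p = Ioo (0 : ℝ) 1 := by
    rw [preimage_const_mul_Ioo₀ _ _ hp, zero_div, div_self hp.ne']
  rw [← hpre, ← Measure.restrict_map (measurable_const_mul p) measurableSet_Ioo,
    Real.map_volume_mul_left hp.ne', Measure.restrict_smul, smul_smul,
    abs_of_pos (inv_pos.2 hp), ← ENNReal.ofReal_mul hp.le, mul_inv_cancel₀ hp.ne',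
    ENNReal.ofReal_one, one_smul]

lemma cond_Iio_volume_restrict_Ioo_zero_one {p : ℝ} (hp : 0 < p) (hp1 : p ≤ 1) :
    (volume.restrict (Ioo (0 : ℝ) 1))[|Iio p] =
      (volume.restrict (Ioo (0 : ℝ) 1)).map (p * ·) := by
  have hinter : Iio p ∩ Ioo (0 : ℝ) 1 = Ioo 0 p := by
    rw [inter_comm, Ioo_inter_Iio, min_eq_right hp1]
  rw [ProbabilityTheory.cond, Measure.restrict_apply measurableSet_Iio,
    Measure.restrict_restrict measurableSet_Iio, hinter, Real.volume_Ioo, sub_zero,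
    volume_restrict_Ioo_zero_eq_smul_map_const_mul hp,
    smul_smul, ENNReal.inv_mul_cancel (by simpa using hp) ENNReal.ofReal_ne_top, one_smul]

lemma setOf_rpow_one_div_le_ae_eq_Iio {β c : ℝ} (hβ : 0 < β) (hc : 0 ≤ c) :
    {t : ℝ | t ^ (1 / β) ≤ c} =ᵐ[volume.restrict (Ioo 0 1)] Iio (c ^ β) := by
  refine Filter.EventuallyEq.trans ?_ Iio_ae_eq_Iic.symm
  refine Filter.eventuallyEq_set.2 ((ae_restrict_mem measurableSet_Ioo).mono fun t ht => ?_)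
  exact (one_div β).symm ▸ Real.rpow_inv_le_iff_of_pos ht.1.le hc hβ

lemma Real.rpow_mul_one_div_rpow {β c t : ℝ} (hβ : β ≠ 0) (hc : 0 ≤ c) (ht : 0 ≤ t) :
    (c ^ β * t) ^ (1 / β) = c * t ^ (1 / β) := by
  rw [Real.mul_rpow (Real.rpow_nonneg hc β) ht, one_div, Real.rpow_rpow_inv hc hβ]

theorem vervaat_conditional_dist_general {Ω : Type*} [MeasureSpace Ω]
    (β : ℝ) (hβ : 0 < β) (x : ℝ) (hx : 0 ≤ x)
    (U : Ω → ℝ) (hU : Measurable U)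
    (hUd : Measure.map U ℙ = volume.restrict (Set.Ioo 0 1)) :
    Measure.map (fun ω => U ω ^ (1/β) * (1 + x))
        (ProbabilityTheory.cond ℙ {ω | U ω ^ (1/β) ≤ 1 / (1 + x)})
      = Measure.map (fun ω => U ω ^ (1/β)) ℙ := by
  set c : ℝ := 1 / (1 + x)
  have hc : 0 < c := by positivity
  have hc1 : c ≤ 1 := div_le_one_of_le₀ (by linarith) (by linarith)
  have hcx : c * (1 + x) = 1 := one_div_mul_cancel (by linarith)
  set p : ℝ := c ^ β
  have hp : 0 < p := Real.rpow_pos_of_pos hc β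
  have hg : Measurable fun t : ℝ => t ^ (1/β) := by fun_prop
  have hT : MeasurableSet {t : ℝ | t ^ (1/β) ≤ c} := hg measurableSet_Iic
  have hscale : ∀ t ∈ Ioo (0 : ℝ) 1, (p * t) ^ (1/β) * (1 + x) = t ^ (1/β) := fun t ht => by
    rw [Real.rpow_mul_one_div_rpow hβ.ne' hc.le ht.1.le, mul_right_comm, hcx, one_mul]
  calc Measure.map (fun ω => U ω ^ (1/β) * (1 + x)) ℙ[|U ⁻¹' {t | t ^ (1/β) ≤ c}]
      = ((Measure.map U ℙ)[|{t | t ^ (1/β) ≤ c}]).map (fun t => t ^ (1/β) * (1 + x)) := by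
        rw [← map_cond_preimage hU hT, Measure.map_map (hg.mul_const _) hU]; rfl
    _ = ((volume.restrict (Ioo 0 1)).map (p * ·)).map (fun t => t ^ (1/β) * (1 + x)) := by
        rw [hUd, cond_congr_set (setOf_rpow_one_div_le_ae_eq_Iio hβ hc.le),
          cond_Iio_volume_restrict_Ioo_zero_one hp (Real.rpow_le_one hc.le hc1 hβ.le)]
    _ = (volume.restrict (Ioo 0 1)).map (fun t => t ^ (1/β)) := by
        rw [Measure.map_map (hg.mul_const _) (measurable_const_mul p)]
        exact Measure.map_congr ((ae_restrict_mem measurableSet_Ioo).mono hscale)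
    _ = Measure.map (fun ω => U ω ^ (1/β)) ℙ := by rw [← hUd, Measure.map_map hg hU]; rfl

theorem vervaat_conditional_dist {Ω : Type*} [MeasureSpace Ω]
    [IsProbabilityMeasure (ℙ : Measure Ω)]
    (β : ℝ) (hβ : 0 < β) (x : ℝ) (hx : 0 ≤ x)
    (U : Ω → ℝ) (hU : Measurable U)
    (hUd : Measure.map U ℙ = volume.restrict (Set.Ioo 0 1)) :
    Measure.map (fun ω => U ω ^ (1/β) * (1 + x))
        (ProbabilityTheory.cond ℙ {ω | U ω ^ (1/β) ≤ 1 / (1 + x)})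
      = Measure.map (fun ω => U ω ^ (1/β)) ℙ :=
  vervaat_conditional_dist_general β hβ x hx U hU hUd
end

section
/- If W(1), W(2) are independent random variables each distributed as U^{1/β} with U uniform on (0,1), then for every x ≥ 0 the random variable φ(x, W(1), W(2)) has the same distribution as W(1+x), where W = U^{1/β}. In other words, φ is an update function for the Markov kernel K(x,·) = Law(W(1+x)). -/
/-! The law of `W = U ^ (1 / β)` has distribution function `s ↦ s ^ β` on `[0, 1]`, which is
multiplicative: `P(W ≤ s t) = P(W ≤ s) P(W ≤ t)` for `0 ≤ s ≤ 1` and `t ≤ 1`. Put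
`c = 1 / (1 + x)`, so that `{(1 + x) W(1) ≤ t} = {W(1) ≤ c t}` and
`{φ ≤ t} = {W(1) ≤ c, W(2) ≤ t} ∪ {c < W(1) ≤ c t}`. For `t < 1` the second event is empty
and the first has probability `P(W ≤ c) P(W ≤ t) = P(W ≤ c t)`; for `t ≥ 1` we have
`W(2) ≤ t` almost surely and the two events recombine to `{W(1) ≤ c t}`. -/

open MeasureTheory ProbabilityTheory Set

noncomputable def powerLaw (β : ℝ) : Measure ℝ :=
  Measure.map (fun u : ℝ => u ^ (1/β)) (volume.restrict (Ioo 0 1))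

lemma powerLaw_Iic {β : ℝ} (hβ : 0 < β) {s : ℝ} (hs : 0 ≤ s) :
    powerLaw β (Iic s) = ENNReal.ofReal (min 1 (s ^ β)) := by
  have hg : Measurable fun u : ℝ => u ^ (1/β) := by fun_prop
  have hpre : (fun u : ℝ => u ^ (1/β)) ⁻¹' Iic s ∩ Ioc 0 1 = Ioc 0 (min 1 (s ^ β)) := by
    ext u
    simp only [mem_inter_iff, mem_preimage, mem_Iic, mem_Ioc, le_min_iff]
    constructor
    · rintro ⟨hus, hu0, hu1⟩
      exact ⟨hu0, hu1, (Real.rpow_inv_le_iff_of_pos hu0.le hs hβ).1 (by rwa [← one_div])⟩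
    · rintro ⟨hu0, hu1, hus⟩
      exact ⟨by rw [one_div]; exact (Real.rpow_inv_le_iff_of_pos hu0.le hs hβ).2 hus, hu0, hu1⟩
  rw [powerLaw, Measure.map_apply hg measurableSet_Iic, Measure.restrict_congr_set Ioo_ae_eq_Ioc,
    Measure.restrict_apply (hg measurableSet_Iic), hpre, Real.volume_Ioc, sub_zero]

lemma powerLaw_Iic_one {β : ℝ} (hβ : 0 < β) : powerLaw β (Iic 1) = 1 := by
  simp [powerLaw_Iic hβ zero_le_one]

lemma powerLaw_Iic_of_nonpos {β : ℝ} (hβ : 0 < β) {s : ℝ} (hs : s ≤ 0) :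
    powerLaw β (Iic s) = 0 :=
  measure_mono_null (Iic_subset_Iic.2 hs) (by simp [powerLaw_Iic hβ le_rfl, hβ.ne'])

lemma powerLaw_Iic_mul {β : ℝ} (hβ : 0 < β) {s t : ℝ} (hs₀ : 0 ≤ s) (hs₁ : s ≤ 1) (ht : t ≤ 1) :
    powerLaw β (Iic (s * t)) = powerLaw β (Iic s) * powerLaw β (Iic t) := by
  rcases le_total t 0 with ht₀ | ht₀
  · rw [powerLaw_Iic_of_nonpos hβ ht₀,
      powerLaw_Iic_of_nonpos hβ (mul_nonpos_of_nonneg_of_nonpos hs₀ ht₀), mul_zero]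
  · have hpow {r : ℝ} (hr₀ : 0 ≤ r) (hr₁ : r ≤ 1) : min 1 (r ^ β) = r ^ β :=
      min_eq_right (Real.rpow_le_one hr₀ hr₁ hβ.le)
    rw [powerLaw_Iic hβ hs₀, powerLaw_Iic hβ ht₀, powerLaw_Iic hβ (mul_nonneg hs₀ ht₀),
      hpow hs₀ hs₁, hpow ht₀ ht, hpow (mul_nonneg hs₀ ht₀) (mul_le_one₀ hs₁ ht₀ ht),
      Real.mul_rpow hs₀ ht₀, ENNReal.ofReal_mul (by positivity)]

lemma preimage_ite_Iic {Ω : Type*} (X Y Z : Ω → ℝ) (c t : ℝ) :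
    (fun ω => if X ω ≤ c then Y ω else Z ω) ⁻¹' Iic t
      = (X ⁻¹' Iic c ∩ Y ⁻¹' Iic t) ∪ (Z ⁻¹' Iic t \ X ⁻¹' Iic c) := by
  ext ω
  by_cases h : X ω ≤ c <;> simp [h]

theorem map_ite_le_eq_map_mul {Ω : Type*} [MeasurableSpace Ω] {P : Measure Ω}
    [IsProbabilityMeasure P] {μ : Measure ℝ} {W₁ W₂ : Ω → ℝ}
    (h₁ : Measurable W₁) (h₂ : Measurable W₂) (hd₁ : P.map W₁ = μ) (hd₂ : P.map W₂ = μ)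
    (hindep : IndepFun W₁ W₂ P) (hone : μ (Iic 1) = 1)
    (hmul : ∀ s t, 0 ≤ s → s ≤ 1 → t ≤ 1 → μ (Iic (s * t)) = μ (Iic s) * μ (Iic t))
    {a : ℝ} (ha : 1 ≤ a) :
    P.map (fun ω => if W₁ ω ≤ 1 / a then W₂ ω else W₁ ω * a) = P.map (fun ω => W₁ ω * a) := by
  have ha₀ : 0 < a := by linarith
  have hc₀ : 0 ≤ 1 / a := by positivity
  have hc₁ : 1 / a ≤ 1 := by rw [div_le_one ha₀]; exact ha
  have hcdf₁ (r : ℝ) : P (W₁ ⁻¹' Iic r) = μ (Iic r) := by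
    rw [← hd₁, Measure.map_apply h₁ measurableSet_Iic]
  have hcdf₂ (r : ℝ) : P (W₂ ⁻¹' Iic r) = μ (Iic r) := by
    rw [← hd₂, Measure.map_apply h₂ measurableSet_Iic]
  have hA : MeasurableSet (W₁ ⁻¹' Iic (1 / a)) := h₁ measurableSet_Iic
  have hφ : Measurable fun ω => if W₁ ω ≤ 1 / a then W₂ ω else W₁ ω * a :=
    Measurable.ite hA h₂ (h₁.mul_const a)
  have := Measure.isProbabilityMeasure_map (μ := P) hφ.aemeasurable
  refine Measure.ext_of_Iic _ _ fun t => ?_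
  have hscale : (fun ω => W₁ ω * a) ⁻¹' Iic t = W₁ ⁻¹' Iic (1 / a * t) := by
    ext ω
    simp only [mem_preimage, mem_Iic, one_div_mul_eq_div, le_div_iff₀ ha₀]
  have hdisj : Disjoint (W₁ ⁻¹' Iic (1 / a) ∩ W₂ ⁻¹' Iic t)
      (W₁ ⁻¹' Iic (1 / a * t) \ W₁ ⁻¹' Iic (1 / a)) :=
    disjoint_left.2 fun _ hω hω' => hω'.2 hω.1
  rw [Measure.map_apply hφ measurableSet_Iic, Measure.map_apply (h₁.mul_const a) measurableSet_Iic,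
    preimage_ite_Iic, hscale, measure_union hdisj ((h₁ measurableSet_Iic).diff hA),
    hindep.measure_inter_preimage_eq_mul _ _ measurableSet_Iic measurableSet_Iic, hcdf₁, hcdf₂]
  rcases lt_or_ge t 1 with ht | ht
  · have hempty : W₁ ⁻¹' Iic (1 / a * t) \ W₁ ⁻¹' Iic (1 / a) = ∅ :=
      sdiff_eq_empty.2 <| preimage_mono <| Iic_subset_Iic.2 <|
        mul_le_of_le_one_right hc₀ ht.le
    rw [hempty, measure_empty, add_zero, hcdf₁, hmul _ _ hc₀ hc₁ ht.le]
  · have hμt : μ (Iic t) = 1 :=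
      le_antisymm (hd₂ ▸ prob_le_one) (hone ▸ measure_mono (Iic_subset_Iic.2 ht))
    rw [hμt, mul_one, ← hcdf₁, measure_add_sdiff hA.nullMeasurableSet, union_eq_right.2]
    exact preimage_mono <| Iic_subset_Iic.2 <| le_mul_of_one_le_right hc₀ ht

theorem multigamma_update {Ω : Type*} [MeasureSpace Ω]
    [IsProbabilityMeasure (ℙ : Measure Ω)]
    (β : ℝ) (hβ : 0 < β) (W1 W2 : Ω → ℝ) (h1 : Measurable W1) (h2 : Measurable W2)
    (hd1 : Measure.map W1 ℙ
      = Measure.map (fun u : ℝ => u ^ (1/β)) (volume.restrict (Set.Ioo 0 1)))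
    (hd2 : Measure.map W2 ℙ
      = Measure.map (fun u : ℝ => u ^ (1/β)) (volume.restrict (Set.Ioo 0 1)))
    (hindep : IndepFun W1 W2 ℙ) :
    ∀ x : ℝ, 0 ≤ x →
      Measure.map (fun ω => if W1 ω ≤ 1 / (1 + x) then W2 ω else W1 ω * (1 + x)) ℙ
        = Measure.map (fun ω => W1 ω * (1 + x)) ℙ := by
  intro x hx
  exact map_ite_le_eq_map_mul (μ := powerLaw β) h1 h2 hd1 hd2 hindep (powerLaw_Iic_one hβ)
    (fun _ _ hs₀ hs₁ ht => powerLaw_Iic_mul hβ hs₀ hs₁ ht) (by linarith)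
end

section
/- Fix β > 0 and set x_0 = ⌈2/(1-(2/3)^{1/β})⌉ - 1. Define φ(x,w1,w2) = w2 if w1 ≤ 1/(1+x), else w1(1+x), and ψ(x,w1,w2) = x + 1{w1 > (2/3)^{1/β}} - 1{w1 ≤ (2/3)^{1/β} and x ≥ x_0}. Then for all integers x ≥ x_0 - 1 and all w1, w2 ∈ [0,1), φ(x,w1,w2) ≤ ψ(x,w1,w2). -/
theorem phi_le_psi (β : ℝ) (hβ : 0 < β) (x0 : ℤ)
    (hx0 : x0 = ⌈(2 : ℝ) / (1 - (2/3 : ℝ) ^ (1/β))⌉ - 1)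
    (x : ℤ) (hx : x0 - 1 ≤ x) (w1 w2 : ℝ)
    (h1 : w1 ∈ Set.Ico (0:ℝ) 1) (h2 : w2 ∈ Set.Ico (0:ℝ) 1) :
    (if w1 ≤ 1 / (1 + (x : ℝ)) then w2 else w1 * (1 + (x : ℝ))) ≤
      (x : ℝ) + (if (2/3 : ℝ) ^ (1/β) < w1 then 1 else 0)
        - (if w1 ≤ (2/3 : ℝ) ^ (1/β) ∧ x0 ≤ x then 1 else 0) := by
  obtain ⟨hw10, hw11⟩ := h1
  obtain ⟨hw20, hw21⟩ := h2
  set c : ℝ := (2/3 : ℝ) ^ (1/β) with hc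
  have hc0 : 0 < c := by positivity
  have hc1 : c < 1 := Real.rpow_lt_one (by norm_num) (by norm_num) (by positivity)
  have hden : 0 < 1 - c := by linarith
  have hceil : (2 : ℝ) / (1 - c) ≤ (⌈(2 : ℝ) / (1 - c)⌉ : ℝ) := Int.le_ceil _
  have hcancel : (2 : ℝ) / (1 - c) * (1 - c) = 2 := div_mul_cancel₀ _ (ne_of_gt hden)
  have hx0r : (x0 : ℝ) ≥ 2 / (1 - c) - 1 := by
    rw [hx0]; push_cast; linarith
  have hxr : (x : ℝ) ≥ 2 / (1 - c) - 2 := by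
    have : ((x0 : ℝ) - 1) ≤ x := by exact_mod_cast hx
    linarith
  have hkey : 2 * c ≤ (x : ℝ) * (1 - c) := by nlinarith
  have hxpos : (0 : ℝ) < x := by nlinarith
  have hx1 : (1 : ℝ) ≤ x := by
    have : (0 : ℤ) < x := by exact_mod_cast hxpos
    exact_mod_cast this
  have h1x : (0 : ℝ) < 1 + x := by linarith
  have hstrong : ∀ _ : x0 ≤ x, (1 : ℝ) + c ≤ (x : ℝ) * (1 - c) := by
    intro hle
    have : (x0 : ℝ) ≤ x := by exact_mod_cast hle
    nlinarith
  split_ifs with hif1 hif2 hif3 hif3 hif2 hif3 hif3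
  · exact absurd hif3.1 (not_le.mpr hif2)
  · linarith
  · -- w2 ≤ x - 1 : need x ≥ 2
    have hs := hstrong hif3.2
    have hx2 : (2 : ℝ) ≤ x := by
      have hgt : (1 : ℝ) < x := by nlinarith
      have : (1 : ℤ) < x := by exact_mod_cast hgt
      have : (2 : ℤ) ≤ x := this
      exact_mod_cast this
    linarith
  · linarith
  · exact absurd hif3.1 (not_le.mpr hif2)
  · nlinarith
  · have hs := hstrong hif3.2
    have hw1c : w1 ≤ c := hif3.1
    nlinarith
  · have hw1c : w1 ≤ c := not_lt.mp hif2
    nlinarith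
end

section
/- For the CIAFTP algorithm for the Vervaat perpetuity with parameter β > 0, the expected number of backward steps satisfies E[T] ≤ 2(x_0+1)^β + 3, where x_0 = ⌈2/(1-(2/3)^{1/β})⌉ - 1. -/
/-!
Lyapunov argument. Put `c = 2 (x0 + 1)^β` and `V x = 3 (x - x0 + 1) + c`, and let
`W t = E[V(D_t); no coalescence in steps 1, …, t]`. A step that does not coalesce lowers `V` by
at least `1` in conditional expectation: above the floor `x0 - 1` the chain drifts down and `V`
drops by exactly `1`; at the floor `V = c`, and the step coalesces with probability at least
`min 1 (3/2 (x0 + 1)^(-β))`, which is enough because `c (x0 + 1)^(-β) = 2`. Hence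
`W (t + 1) + P(T > t) ≤ W t`, so `E[T] = ∑ P(T > t) ≤ W 0 = E[V(D_0)] = c + 3 E[G - 1] = c + 3`.
The uniforms of step `t + 1` are independent of `D_t` and of the coalescence history, because
these only depend on the uniforms used before.
-/

open MeasureTheory ProbabilityTheory Set Function
open scoped ENNReal

local notation "𝒰" => (volume.restrict (Ioo (0 : ℝ) 1) : Measure ℝ)

section

variable {Ω : Type*} [MeasurableSpace Ω] {μ : Measure Ω}

theorem ProbabilityTheory.iIndepFun.indepFun_comp_of_dependsOn {ι α β : Type*}
    {𝓧 : ι → Type*} [∀ i, MeasurableSpace (𝓧 i)] [∀ i, Nonempty (𝓧 i)]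
    [MeasurableSpace α] [MeasurableSpace β] {ξ : (i : ι) → Ω → 𝓧 i} (hξ : iIndepFun ξ μ)
    (hξm : ∀ i, Measurable (ξ i)) {S T : Finset ι} (hST : Disjoint S T)
    {f : (Π i, 𝓧 i) → α} {g : (Π i, 𝓧 i) → β} (hf : Measurable f) (hg : Measurable g)
    (hfS : DependsOn f S) (hgT : DependsOn g T) :
    IndepFun (fun ω ↦ f (ξ · ω)) (fun ω ↦ g (ξ · ω)) μ := by
  classical
  set x : Π i, 𝓧 i := Classical.arbitrary _
  have hS : (fun ω ↦ f (ξ · ω)) = (f ∘ updateFinset x S) ∘ fun ω (i : S) ↦ ξ i ω :=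
    funext fun ω ↦ hfS fun i hi ↦ by simp [updateFinset, Finset.mem_coe.1 hi]
  have hT : (fun ω ↦ g (ξ · ω)) = (g ∘ updateFinset x T) ∘ fun ω (i : T) ↦ ξ i ω :=
    funext fun ω ↦ hgT fun i hi ↦ by simp [updateFinset, Finset.mem_coe.1 hi]
  rw [hS, hT]
  exact (hξ.indepFun_finset S T hST hξm).comp (hf.comp measurable_updateFinset)
    (hg.comp measurable_updateFinset)

theorem ProbabilityTheory.IndepFun.lintegral_comp_eq {α β : Type*} [MeasurableSpace α]
    [MeasurableSpace β] [IsFiniteMeasure μ] {X : Ω → α} {Y : Ω → β} (hXY : IndepFun X Y μ)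
    (hX : Measurable X) (hY : Measurable Y) {F : α → β → ℝ≥0∞} (hF : Measurable (uncurry F)) :
    ∫⁻ ω, F (X ω) (Y ω) ∂μ = ∫⁻ ω, ∫⁻ y, F (X ω) y ∂(μ.map Y) ∂μ := by
  rw [show ∫⁻ ω, F (X ω) (Y ω) ∂μ = ∫⁻ ω, uncurry F (X ω, Y ω) ∂μ from rfl,
    ← lintegral_map hF (hX.prodMk hY),
    (indepFun_iff_map_prod_eq_prod_map_map hX.aemeasurable hY.aemeasurable).1 hXY,
    lintegral_prod _ hF.aemeasurable, lintegral_map hF.lintegral_prod_right' hX]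
  rfl

theorem MeasureTheory.lintegral_natCast_le_tsum_measure {N : Ω → ℕ} {A : ℕ → Set Ω}
    (hNA : ∀ᵐ ω ∂μ, ∀ t < N ω, ω ∈ A t) : ∫⁻ ω, (N ω : ℝ≥0∞) ∂μ ≤ ∑' t, μ (A t) := by
  have hN : ∀ᵐ ω ∂μ, (N ω : ℝ≥0∞) ≤ ∑' t, (toMeasurable μ (A t)).indicator 1 ω := by
    filter_upwards [hNA] with ω hω
    calc (N ω : ℝ≥0∞) = ∑ t ∈ Finset.range (N ω), (toMeasurable μ (A t)).indicator 1 ω := by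
          rw [Finset.sum_congr rfl fun t ht ↦ indicator_of_mem
            (subset_toMeasurable μ _ (hω t (Finset.mem_range.1 ht))) _]
          simp
      _ ≤ _ := ENNReal.sum_le_tsum _
  calc ∫⁻ ω, (N ω : ℝ≥0∞) ∂μ ≤ ∫⁻ ω, ∑' t, (toMeasurable μ (A t)).indicator 1 ω ∂μ :=
        lintegral_mono_ae hN
    _ = ∑' t, μ (A t) := by
      rw [lintegral_tsum fun t ↦ (measurable_one.indicator
        (measurableSet_toMeasurable μ (A t))).aemeasurable]
      simp_rw [lintegral_indicator_one (measurableSet_toMeasurable μ _), measure_toMeasurable]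

theorem ENNReal.tsum_le_of_add_le {a b : ℕ → ℝ≥0∞} (h : ∀ t, b (t + 1) + a t ≤ b t) :
    ∑' t, a t ≤ b 0 := by
  refine ENNReal.tsum_le_of_sum_range_le fun n ↦ ?_
  suffices b n + ∑ t ∈ Finset.range n, a t ≤ b 0 from le_add_self.trans this
  induction n with
  | zero => simp
  | succ n ih =>
    rw [Finset.sum_range_succ, ← add_assoc, add_right_comm]
    exact (add_le_add (h n) le_rfl).trans ih

instance : IsProbabilityMeasure 𝒰 := ⟨by simp⟩

lemma uniform_Iic_le (a : ℝ) : 𝒰 (Iic a) ≤ ENNReal.ofReal a := by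
  rw [Measure.restrict_apply measurableSet_Iic]
  calc volume (Iic a ∩ Ioo 0 1) ≤ volume (Ioc 0 a) :=
        measure_mono fun u hu ↦ ⟨hu.2.1, hu.1⟩
    _ = ENNReal.ofReal a := by rw [Real.volume_Ioc, sub_zero]

lemma uniform_Ioi_le (a : ℝ) : 𝒰 (Ioi a) ≤ ENNReal.ofReal (1 - a) := by
  rw [Measure.restrict_apply measurableSet_Ioi]
  calc volume (Ioi a ∩ Ioo 0 1) ≤ volume (Ioo a 1) :=
        measure_mono fun u hu ↦ ⟨hu.1, hu.2.2⟩
    _ = ENNReal.ofReal (1 - a) := Real.volume_Ioo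

lemma lintegral_uniform_ite_le (a : ℝ) (A B : ℝ≥0∞) :
    ∫⁻ u, (if u ≤ a then A else B) ∂𝒰 ≤ A * ENNReal.ofReal a + B * ENNReal.ofReal (1 - a) := by
  calc ∫⁻ u, (if u ≤ a then A else B) ∂𝒰
      = ∫⁻ u, (Iic a).piecewise (fun _ ↦ A) (fun _ ↦ B) u ∂𝒰 := rfl
    _ = A * 𝒰 (Iic a) + B * 𝒰 (Ioi a) := by
      rw [lintegral_piecewise measurableSet_Iic, setLIntegral_const, setLIntegral_const, compl_Iic]
    _ ≤ _ := by gcongr <;> [exact uniform_Iic_le a; exact uniform_Ioi_le a]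

lemma lintegral_ceil_neg_log_div_log_two_le :
    ∫⁻ u, ((⌈-Real.log u / Real.log 2⌉ - 1).toNat : ℝ≥0∞) ∂𝒰 ≤ 1 := by
  have htail : ∀ᵐ u ∂𝒰, ∀ j < (⌈-Real.log u / Real.log 2⌉ - 1).toNat,
      u ∈ Iio ((2 : ℝ)⁻¹ ^ (j + 1)) := by
    filter_upwards [ae_restrict_mem measurableSet_Ioo] with u hu j hj
    have hj : ((j + 1 : ℕ) : ℝ) < -Real.log u / Real.log 2 := Int.lt_ceil.1 (by omega)
    rw [lt_div_iff₀ (Real.log_pos one_lt_two)] at hj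
    rw [mem_Iio, ← Real.log_lt_log_iff hu.1 (by positivity), Real.log_pow, Real.log_inv]
    linarith
  calc _ ≤ ∑' j : ℕ, 𝒰 (Iio ((2 : ℝ)⁻¹ ^ (j + 1))) := lintegral_natCast_le_tsum_measure htail
    _ ≤ ∑' j : ℕ, (2⁻¹ : ℝ≥0∞) ^ (j + 1) := ENNReal.tsum_le_tsum fun j ↦ by
        refine (measure_mono Iio_subset_Iic_self).trans ((uniform_Iic_le _).trans_eq ?_)
        rw [ENNReal.ofReal_pow (by norm_num), ENNReal.ofReal_inv_of_pos two_pos,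
          ENNReal.ofReal_ofNat]
    _ = 1 := by
        rw [ENNReal.tsum_geometric_add_one, ENNReal.one_sub_inv_two, inv_inv,
          ENNReal.inv_mul_cancel two_ne_zero ENNReal.ofNat_ne_top]

lemma two_lt_two_div_one_sub_rpow {β : ℝ} (hβ : 0 < β) : 2 < 2 / (1 - (2/3 : ℝ) ^ (1/β)) := by
  have h₀ : 0 < (2/3 : ℝ) ^ (1/β) := by positivity
  have h₁ : (2/3 : ℝ) ^ (1/β) < 1 := Real.rpow_lt_one (by norm_num) (by norm_num) (by positivity)
  rw [lt_div_iff₀ (by linarith)]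
  linarith

namespace Vervaat

open scoped Classical

variable (x0 : ℤ) (β : ℝ)

noncomputable def step (x : ℤ) (u : ℝ) : ℤ :=
  if u ≤ 1/3 then x + 1 else max (x - 1) (x0 - 1)

noncomputable def imputed (x : ℤ) (u v : ℝ) : ℝ :=
  if 1/3 < u ∧ x0 - 1 < x then 2/3 + v/3 else 2/3 * v

/-- The dominating chain as a function of the driving uniforms `g`: `g 2` gives the start,
`g (3 * t)` the move of step `t + 1` and `g (3 * t + 1)` its imputed uniform. -/
noncomputable def chain : ℕ → (ℕ → ℝ) → ℤ
  | 0, g => x0 - 2 + ⌈-Real.log (g 2) / Real.log 2⌉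
  | t + 1, g => step x0 (chain t g) (g (3 * t))

/-- Coalescence at backward step `t + 1`. -/
def Coalesces (t : ℕ) (g : ℕ → ℝ) : Prop :=
  imputed x0 (chain x0 t g) (g (3 * t)) (g (3 * t + 1)) ≤ ((chain x0 (t + 1) g : ℝ) + 1) ^ (-β)

def Survives (t : ℕ) (g : ℕ → ℝ) : Prop := ∀ s < t, ¬ Coalesces x0 β s g

def drivers (t : ℕ) : Finset ℕ := insert 2 (Finset.range (3 * t))

variable {x0 β}

lemma drivers_mono {s t : ℕ} (h : s ≤ t) : (drivers s : Set ℕ) ⊆ drivers t := by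
  intro i
  simp only [drivers, Finset.coe_insert, Finset.coe_range, mem_insert_iff, mem_Iio]
  omega

lemma mem_drivers_succ {t i : ℕ} (hi : i < 3 * t + 3) : i ∈ (drivers (t + 1) : Set ℕ) := by
  simp only [drivers, Finset.coe_insert, Finset.coe_range, mem_insert_iff, mem_Iio]
  omega

variable (x0 β)

lemma measurable_chain (t : ℕ) : Measurable (chain x0 t) := by
  induction t with
  | zero =>
    exact measurable_const.add <| Int.measurable_ceil.comp <|
      (Real.measurable_log.comp (measurable_pi_apply 2)).neg.div_const _
  | succ t ih =>
    exact Measurable.ite (measurableSet_le (measurable_pi_apply _) measurable_const)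
      (ih.add_const _) ((ih.sub_const _).max measurable_const)

lemma dependsOn_chain (t : ℕ) : DependsOn (chain x0 t) (drivers t) := by
  induction t with
  | zero => exact fun g g' h ↦ by simp [chain, h 2 (by simp [drivers])]
  | succ t ih =>
    intro g g' h
    simp only [chain]
    rw [ih fun i hi ↦ h i (drivers_mono t.le_succ hi), h _ (mem_drivers_succ (by omega))]

lemma measurableSet_coalesces (t : ℕ) : MeasurableSet {g | Coalesces x0 β t g} := by
  refine measurableSet_le ?_ ((measurable_from_top (f := fun z : ℤ ↦ ((z : ℝ) + 1) ^ (-β))).comp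
    (measurable_chain x0 (t + 1)))
  refine Measurable.ite ?_ (measurable_const.add ((measurable_pi_apply _).div_const _))
    (measurable_const.mul (measurable_pi_apply _))
  exact (measurableSet_lt measurable_const (measurable_pi_apply _)).inter
    (measurable_chain x0 t measurableSet_Ioi)

lemma dependsOn_coalesces (t : ℕ) : DependsOn (Coalesces x0 β t) (drivers (t + 1)) := by
  intro g g' h
  simp only [Coalesces, dependsOn_chain x0 (t + 1) h,
    dependsOn_chain x0 t fun i hi ↦ h i (drivers_mono t.le_succ hi),
    h _ (mem_drivers_succ (by omega : 3 * t < _)),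
    h _ (mem_drivers_succ (by omega : 3 * t + 1 < _))]

lemma measurableSet_survives (t : ℕ) : MeasurableSet {g | Survives x0 β t g} := by
  simp only [Survives, ofPred_forall]
  exact .iInter fun s ↦ .iInter fun _ ↦ (measurableSet_coalesces x0 β s).compl

lemma dependsOn_survives (t : ℕ) : DependsOn (Survives x0 β t) (drivers t) := by
  intro g g' h
  refine propext <| forall₂_congr fun s hs ↦ ?_
  rw [dependsOn_coalesces x0 β s fun i hi ↦ h i (drivers_mono hs hi)]

lemma survives_succ {t : ℕ} {g : ℕ → ℝ} :
    Survives x0 β (t + 1) g ↔ Survives x0 β t g ∧ ¬ Coalesces x0 β t g := by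
  simp only [Survives, Nat.forall_lt_succ_right]

lemma le_chain {g : ℕ → ℝ} (hg : g 2 ∈ Ioo 0 1) (t : ℕ) : x0 - 1 ≤ chain x0 t g := by
  induction t with
  | zero =>
    have : (0 : ℝ) < -Real.log (g 2) / Real.log 2 :=
      div_pos (neg_pos.2 (Real.log_neg hg.1 hg.2)) (Real.log_pos one_lt_two)
    have := Int.lt_ceil.2 (by exact_mod_cast this : ((0 : ℤ) : ℝ) < _)
    simp only [chain]
    omega
  | succ t ih =>
    simp only [chain, step]
    split_ifs
    · omega
    · exact le_max_right _ _

noncomputable def lyapunov (x : ℤ) : ℝ := 3 * (x - x0 + 1) + 2 * ((x0 : ℝ) + 1) ^ β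

noncomputable def killedLyapunov (x : ℤ) (q : ℝ × ℝ) : ℝ≥0∞ :=
  if imputed x0 x q.1 q.2 ≤ ((step x0 x q.1 : ℝ) + 1) ^ (-β) then 0
  else ENNReal.ofReal (lyapunov x0 β (step x0 x q.1))

lemma measurable_step (x : ℤ) : Measurable (step x0 x) :=
  Measurable.ite measurableSet_Iic measurable_const measurable_const

lemma measurable_lyapunov_step (x : ℤ) :
    Measurable fun u ↦ ENNReal.ofReal (lyapunov x0 β (step x0 x u)) :=
  (measurable_from_top (f := fun z : ℤ ↦ ENNReal.ofReal (lyapunov x0 β z))).comp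
    (measurable_step x0 x)

lemma measurable_killedLyapunov (x : ℤ) : Measurable (killedLyapunov x0 β x) := by
  have hstep : Measurable fun q : ℝ × ℝ ↦ step x0 x q.1 :=
    (measurable_step x0 x).comp measurable_fst
  refine Measurable.ite (measurableSet_le ?_ ((measurable_from_top (f := fun z : ℤ ↦
    ((z : ℝ) + 1) ^ (-β))).comp hstep)) measurable_const
    ((measurable_lyapunov_step x0 β x).comp measurable_fst)
  exact Measurable.ite ((measurableSet_lt measurable_const measurable_fst).inter
    (MeasurableSet.const _)) (measurable_const.add (measurable_snd.div_const _))
    (measurable_const.mul measurable_snd)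

variable {x0 β}

lemma two_le_lyapunov (hβ : 0 ≤ β) (hx0 : 0 ≤ x0) {x : ℤ} (hx : x0 - 1 ≤ x) :
    2 ≤ lyapunov x0 β x := by
  have hx' : (x0 : ℝ) - 1 ≤ x := by exact_mod_cast hx
  have : 1 ≤ ((x0 : ℝ) + 1) ^ β := Real.one_le_rpow (by simp [hx0]) hβ
  unfold lyapunov
  linarith

lemma lintegral_killedLyapunov_le_of_le (hβ : 0 ≤ β) (hx0 : 0 ≤ x0) {x : ℤ} (hx : x0 ≤ x) :
    ∫⁻ q, killedLyapunov x0 β x q ∂((𝒰).prod 𝒰) ≤ ENNReal.ofReal (lyapunov x0 β x - 1) := by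
  have hstep : ∀ u, step x0 x u = if u ≤ 1/3 then x + 1 else x - 1 := fun u ↦ by
    simp only [step, max_eq_left (by omega : x0 - 1 ≤ x - 1)]
  have hVup := two_le_lyapunov hβ hx0 (by omega : x0 - 1 ≤ x + 1)
  have hVdown := two_le_lyapunov hβ hx0 (by omega : x0 - 1 ≤ x - 1)
  calc ∫⁻ q, killedLyapunov x0 β x q ∂((𝒰).prod 𝒰)
      ≤ ∫⁻ q, ENNReal.ofReal (lyapunov x0 β (step x0 x q.1)) ∂((𝒰).prod 𝒰) :=
        lintegral_mono fun q ↦ by unfold killedLyapunov; split_ifs <;> simp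
    _ = ∫⁻ u, (if u ≤ 1/3 then ENNReal.ofReal (lyapunov x0 β (x + 1))
          else ENNReal.ofReal (lyapunov x0 β (x - 1))) ∂𝒰 := by
        rw [lintegral_prod (fun q : ℝ × ℝ ↦ ENNReal.ofReal (lyapunov x0 β (step x0 x q.1)))
          ((measurable_lyapunov_step x0 β x).comp measurable_fst).aemeasurable]
        simp only [lintegral_const, measure_univ, mul_one, hstep, apply_ite]
    _ ≤ _ := lintegral_uniform_ite_le _ _ _
    _ = ENNReal.ofReal (lyapunov x0 β x - 1) := by
        rw [← ENNReal.ofReal_mul (by linarith), ← ENNReal.ofReal_mul (by linarith),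
          ← ENNReal.ofReal_add (by positivity) (by nlinarith)]
        congr 1
        unfold lyapunov
        push_cast
        ring

lemma lintegral_killedLyapunov_boundary_le (hβ : 0 ≤ β) (hx0 : 1 ≤ x0) :
    ∫⁻ q, killedLyapunov x0 β (x0 - 1) q ∂((𝒰).prod 𝒰)
      ≤ ENNReal.ofReal (lyapunov x0 β (x0 - 1) - 1) := by
  have hrc : ((x0 : ℝ) + 1) ^ (-β) * ((x0 : ℝ) + 1) ^ β = 1 := by
    rw [Real.rpow_neg (by positivity), inv_mul_cancel₀ (by positivity)]
  set r := ((x0 : ℝ) + 1) ^ (-β)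
  have hstep : ∀ u, step x0 (x0 - 1) u = if u ≤ 1/3 then x0 else x0 - 1 := fun u ↦ by
    simp only [step, sub_add_cancel, max_eq_right (by omega : x0 - 1 - 1 ≤ x0 - 1)]
  have hK : ∀ q : ℝ × ℝ, killedLyapunov x0 β (x0 - 1) q
      ≤ ENNReal.ofReal (lyapunov x0 β (step x0 (x0 - 1) q.1))
        * (Ioi (3/2 * r)).indicator 1 q.2 := by
    intro q
    -- coalescence is certain when `2/3 v ≤ r`, as `r` is the smallest threshold
    have hr : r ≤ ((step x0 (x0 - 1) q.1 : ℝ) + 1) ^ (-β) := by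
      have hx0' : (1 : ℝ) ≤ x0 := by exact_mod_cast hx0
      refine Real.rpow_le_rpow_of_nonpos ?_ ?_ (neg_nonpos.2 hβ) <;>
        rw [hstep] <;> split_ifs <;> push_cast <;> linarith
    by_cases hv : 2/3 * q.2 ≤ r
    · simp [killedLyapunov, imputed, hv.trans hr]
    · rw [indicator_of_mem (by simp only [mem_Ioi]; linarith), Pi.one_apply, mul_one,
        killedLyapunov]
      split_ifs <;> simp
  have hr0 : 0 ≤ r := by positivity
  calc ∫⁻ q, killedLyapunov x0 β (x0 - 1) q ∂((𝒰).prod 𝒰)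
      ≤ ∫⁻ q, ENNReal.ofReal (lyapunov x0 β (step x0 (x0 - 1) q.1))
          * (Ioi (3/2 * r)).indicator 1 q.2 ∂((𝒰).prod 𝒰) := lintegral_mono hK
    _ = (∫⁻ u, (if u ≤ 1/3 then ENNReal.ofReal (lyapunov x0 β x0)
          else ENNReal.ofReal (lyapunov x0 β (x0 - 1))) ∂𝒰) * 𝒰 (Ioi (3/2 * r)) := by
        rw [lintegral_prod_mul (measurable_lyapunov_step x0 β _).aemeasurable
          (measurable_one.indicator measurableSet_Ioi).aemeasurable,
          lintegral_indicator_one measurableSet_Ioi]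
        simp only [hstep, apply_ite]
    _ ≤ (ENNReal.ofReal (lyapunov x0 β x0) * ENNReal.ofReal (1/3)
          + ENNReal.ofReal (lyapunov x0 β (x0 - 1)) * ENNReal.ofReal (1 - 1/3))
          * ENNReal.ofReal (1 - 3/2 * r) := by
        gcongr
        · exact lintegral_uniform_ite_le _ _ _
        · exact uniform_Ioi_le _
    _ ≤ ENNReal.ofReal (lyapunov x0 β (x0 - 1) - 1) := by
        have hV := two_le_lyapunov hβ (by omega : 0 ≤ x0) (le_refl (x0 - 1))
        have hV' := two_le_lyapunov hβ (by omega : 0 ≤ x0) (by omega : x0 - 1 ≤ x0)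
        rw [← ENNReal.ofReal_mul (by linarith), ← ENNReal.ofReal_mul (by linarith),
          ← ENNReal.ofReal_add (by positivity) (by nlinarith),
          ← ENNReal.ofReal_mul (by nlinarith)]
        refine ENNReal.ofReal_le_ofReal ?_
        simp only [lyapunov] at hV hV' ⊢
        push_cast at hV hV' ⊢
        nlinarith

lemma lintegral_killedLyapunov_add_one_le (hβ : 0 ≤ β) (hx0 : 1 ≤ x0) {x : ℤ} (hx : x0 - 1 ≤ x) :
    ∫⁻ q, killedLyapunov x0 β x q ∂((𝒰).prod 𝒰) + 1 ≤ ENNReal.ofReal (lyapunov x0 β x) := by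
  have hdrift : ∫⁻ q, killedLyapunov x0 β x q ∂((𝒰).prod 𝒰)
      ≤ ENNReal.ofReal (lyapunov x0 β x - 1) := by
    rcases hx.eq_or_lt with rfl | hx
    · exact lintegral_killedLyapunov_boundary_le hβ hx0
    · exact lintegral_killedLyapunov_le_of_le hβ (by omega) (by omega)
  have hV := two_le_lyapunov hβ (by omega) hx
  calc _ ≤ ENNReal.ofReal (lyapunov x0 β x - 1) + ENNReal.ofReal 1 := by
        rw [ENNReal.ofReal_one]; gcongr
    _ = ENNReal.ofReal (lyapunov x0 β x) := by
        rw [← ENNReal.ofReal_add (by linarith) zero_le_one, sub_add_cancel]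

variable (x0 β)

noncomputable def weight (t : ℕ) (g : ℕ → ℝ) : ℝ≥0∞ :=
  if Survives x0 β t g then ENNReal.ofReal (lyapunov x0 β (chain x0 t g)) else 0

lemma weight_succ (t : ℕ) (g : ℕ → ℝ) : weight x0 β (t + 1) g =
    if Survives x0 β t g then killedLyapunov x0 β (chain x0 t g) (g (3 * t), g (3 * t + 1))
    else 0 := by
  simp only [weight, survives_succ, killedLyapunov]
  split_ifs <;> first | rfl | tauto

variable {x0 β}

theorem lintegral_weight_succ_add_le [IsProbabilityMeasure μ] (hβ : 0 ≤ β) (hx0 : 1 ≤ x0)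
    {ξ : ℕ → Ω → ℝ} (hξm : ∀ n, Measurable (ξ n)) (hξi : iIndepFun ξ μ)
    (hξd : ∀ n, μ.map (ξ n) = 𝒰) (t : ℕ) :
    ∫⁻ ω, weight x0 β (t + 1) (ξ · ω) ∂μ + μ {ω | Survives x0 β t (ξ · ω)}
      ≤ ∫⁻ ω, weight x0 β t (ξ · ω) ∂μ := by
  have hξ : Measurable fun ω i ↦ ξ i ω := measurable_pi_lambda _ hξm
  have hS : MeasurableSet {ω | Survives x0 β t (ξ · ω)} := hξ (measurableSet_survives x0 β t)
  have hfX : Measurable fun g ↦ (chain x0 t g, Survives x0 β t g) :=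
    (measurable_chain x0 t).prodMk (measurableSet_setOfPred.1 (measurableSet_survives x0 β t))
  have hXY : IndepFun (fun ω ↦ (chain x0 t (ξ · ω), Survives x0 β t (ξ · ω)))
      (fun ω ↦ (ξ (3 * t) ω, ξ (3 * t + 1) ω)) μ := by
    refine hξi.indepFun_comp_of_dependsOn hξm (S := drivers t) (T := {3 * t, 3 * t + 1}) ?_ hfX
      ((measurable_pi_apply _).prodMk (measurable_pi_apply _))
      (fun g g' h ↦ Prod.ext (dependsOn_chain x0 t h) (dependsOn_survives x0 β t h))
      (fun g g' h ↦ Prod.ext (h _ (by simp)) (h _ (by simp)))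
    refine Finset.disjoint_left.2 fun i hi hi' ↦ ?_
    simp only [drivers, Finset.mem_insert, Finset.mem_range, Finset.mem_singleton] at hi hi'
    omega
  have hYlaw : μ.map (fun ω ↦ (ξ (3 * t) ω, ξ (3 * t + 1) ω)) = (𝒰).prod 𝒰 := by
    rw [(indepFun_iff_map_prod_eq_prod_map_map (hξm _).aemeasurable (hξm _).aemeasurable).1
      (hξi.indepFun (by omega)), hξd, hξd]
  have hF : Measurable (uncurry fun (p : ℤ × Prop) q ↦
      if p.2 then killedLyapunov x0 β p.1 q else 0) :=
    measurable_from_prod_countable_right fun p ↦ by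
      by_cases hp : p.2
      · simpa [hp] using measurable_killedLyapunov x0 β p.1
      · simp [hp]
  have hstart : ∀ᵐ ω ∂μ, ξ 2 ω ∈ Ioo 0 1 :=
    ae_of_ae_map (hξm 2).aemeasurable (by rw [hξd]; exact ae_restrict_mem measurableSet_Ioo)
  calc ∫⁻ ω, weight x0 β (t + 1) (ξ · ω) ∂μ + μ {ω | Survives x0 β t (ξ · ω)}
      = ∫⁻ ω, ((if Survives x0 β t (ξ · ω) then
            ∫⁻ q, killedLyapunov x0 β (chain x0 t (ξ · ω)) q ∂(𝒰).prod 𝒰 else 0)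
          + {ω | Survives x0 β t (ξ · ω)}.indicator 1 ω) ∂μ := by
        rw [lintegral_add_right _ (measurable_one.indicator hS), lintegral_indicator_one hS,
          lintegral_congr fun ω ↦ weight_succ x0 β t _, hXY.lintegral_comp_eq (hfX.comp hξ)
          ((hξm _).prodMk (hξm _)) hF, hYlaw]
        congr 2 with ω
        split_ifs <;> simp
    _ ≤ ∫⁻ ω, weight x0 β t (ξ · ω) ∂μ := by
        refine lintegral_mono_ae ?_
        filter_upwards [hstart] with ω hω
        by_cases hs : Survives x0 β t (ξ · ω)
        · simpa [weight, hs] using lintegral_killedLyapunov_add_one_le hβ hx0 (le_chain x0 hω t)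
        · simp [weight, hs]

theorem tsum_measure_survives_le [IsProbabilityMeasure μ] (hβ : 0 ≤ β) (hx0 : 1 ≤ x0)
    {ξ : ℕ → Ω → ℝ} (hξm : ∀ n, Measurable (ξ n)) (hξi : iIndepFun ξ μ)
    (hξd : ∀ n, μ.map (ξ n) = 𝒰) :
    ∑' t, μ {ω | Survives x0 β t (ξ · ω)} ≤ ∫⁻ ω, weight x0 β 0 (ξ · ω) ∂μ :=
  ENNReal.tsum_le_of_add_le (b := fun t ↦ ∫⁻ ω, weight x0 β t (ξ · ω) ∂μ)
    (lintegral_weight_succ_add_le hβ hx0 hξm hξi hξd)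

theorem lintegral_weight_zero_le (hx0 : 0 ≤ x0) {ξ : ℕ → Ω → ℝ} (hξm : Measurable (ξ 2))
    (hξd : μ.map (ξ 2) = 𝒰) :
    ∫⁻ ω, weight x0 β 0 (ξ · ω) ∂μ ≤ ENNReal.ofReal (2 * ((x0 : ℝ) + 1) ^ β + 3) := by
  set c := 2 * ((x0 : ℝ) + 1) ^ β
  set G : ℝ → ℤ := fun u ↦ ⌈-Real.log u / Real.log 2⌉
  have hG : Measurable G := Int.measurable_ceil.comp (Real.measurable_log.neg.div_const _)
  have hV : ∀ u, ENNReal.ofReal (lyapunov x0 β (x0 - 2 + G u))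
      ≤ 3 * ((G u - 1).toNat : ℝ≥0∞) + ENNReal.ofReal c := fun u ↦ by
    have h : ((G u - 1 : ℤ) : ℝ) ≤ (G u - 1).toNat := by exact_mod_cast Int.self_le_toNat _
    push_cast at h
    calc ENNReal.ofReal (lyapunov x0 β (x0 - 2 + G u)) = ENNReal.ofReal (3 * (G u - 1) + c) := by
          simp only [lyapunov, c]; push_cast; congr 1; ring
      _ ≤ ENNReal.ofReal (3 * (G u - 1)) + ENNReal.ofReal c := ENNReal.ofReal_add_le
      _ ≤ 3 * ((G u - 1).toNat : ℝ≥0∞) + ENNReal.ofReal c := by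
          rw [← ENNReal.ofReal_natCast, ← ENNReal.ofReal_ofNat 3,
            ← ENNReal.ofReal_mul (by norm_num)]
          gcongr
  calc ∫⁻ ω, weight x0 β 0 (ξ · ω) ∂μ = ∫⁻ u, ENNReal.ofReal (lyapunov x0 β (x0 - 2 + G u)) ∂𝒰 := by
        rw [← hξd, lintegral_map (f := fun u ↦ ENNReal.ofReal (lyapunov x0 β (x0 - 2 + G u)))
          ((measurable_from_top (f := fun z : ℤ ↦ ENNReal.ofReal (lyapunov x0 β (x0 - 2 + z)))).comp
          hG) hξm]
        simp [weight, Survives, chain, G]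
    _ ≤ ∫⁻ u, (3 * ((G u - 1).toNat : ℝ≥0∞) + ENNReal.ofReal c) ∂𝒰 := lintegral_mono hV
    _ ≤ 3 * 1 + ENNReal.ofReal c := by
        rw [lintegral_add_right _ measurable_const, lintegral_const_mul (f := fun u ↦
          ((G u - 1).toNat : ℝ≥0∞)) _ ((measurable_from_top (f := fun z : ℤ ↦
          ((z - 1).toNat : ℝ≥0∞))).comp hG), lintegral_const, measure_univ, mul_one]
        gcongr
        exact lintegral_ceil_neg_log_div_log_two_le
    _ = ENNReal.ofReal (c + 3) := by
        rw [mul_one, add_comm, ENNReal.ofReal_add (by positivity) (by norm_num),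
          ENNReal.ofReal_ofNat]

end Vervaat

end

/-- CIAFTP for the Vervaat perpetuity with parameter `β`: the dominating chain `D`
(run backward in time, `D t = D_{-t}`) is driven by i.i.d. uniforms `ξ (3*t)`,
started at `D 0 = x0 - 2 + G` with `G` geometric(1/2) built from the uniform `ξ 2`;
the imputed uniforms `U t = U_{-t}` are built from `ξ (3*t+1)` according to the
direction of the forward move; `T` is the first backward step at which the
multigamma coupler coalesces, i.e. `U t ≤ (D t + 1)^{-β}`.  Then
`E[T] ≤ 2 (x0+1)^β + 3`. -/
theorem expected_time_upper_bound {Ω : Type*} [MeasureSpace Ω]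
    [IsProbabilityMeasure (ℙ : Measure Ω)]
    (β : ℝ) (hβ : 0 < β) (x0 : ℤ)
    (hx0 : x0 = ⌈(2 : ℝ) / (1 - (2/3 : ℝ) ^ (1/β))⌉ - 1)
    (ξ : ℕ → Ω → ℝ) (hξm : ∀ n, Measurable (ξ n))
    (hξi : iIndepFun ξ ℙ)
    (hξd : ∀ n, Measure.map (ξ n) ℙ = volume.restrict (Set.Ioo 0 1))
    (D : ℕ → Ω → ℤ) (U : ℕ → Ω → ℝ) (T : Ω → ℕ)
    (hD0 : ∀ ω, D 0 ω = x0 - 2 + ⌈-Real.log (ξ 2 ω) / Real.log 2⌉)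
    (hDstep : ∀ t ω, D (t + 1) ω =
      if ξ (3 * t) ω ≤ 1/3 then D t ω + 1 else max (D t ω - 1) (x0 - 1))
    (hU : ∀ t ω, U (t + 1) ω =
      if 1/3 < ξ (3 * t) ω ∧ x0 - 1 < D t ω
        then 2/3 + ξ (3 * t + 1) ω / 3
        else 2/3 * ξ (3 * t + 1) ω)
    (hT : ∀ ω, T ω = sInf {t : ℕ | 1 ≤ t ∧ U t ω ≤ ((D t ω : ℝ) + 1) ^ (-β)}) :
    ∫⁻ ω, (T ω : ENNReal) ∂ℙ ≤ ENNReal.ofReal (2 * ((x0 : ℝ) + 1) ^ β + 3) := by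
  have hx0' : 1 ≤ x0 := by
    have := Int.lt_ceil.2 (by exact_mod_cast two_lt_two_div_one_sub_rpow hβ : ((2 : ℤ) : ℝ) < _)
    omega
  have hD : ∀ t ω, D t ω = Vervaat.chain x0 t (ξ · ω) := by
    intro t ω
    induction t with
    | zero => exact hD0 ω
    | succ t ih => rw [hDstep, ih]; rfl
  have hsurv : ∀ ω, ∀ t < T ω, Vervaat.Survives x0 β t (ξ · ω) := by
    intro ω t ht s hs hcoal
    have hcoal' : s + 1 ∈ {t : ℕ | 1 ≤ t ∧ U t ω ≤ ((D t ω : ℝ) + 1) ^ (-β)} :=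
      ⟨by omega, by rw [hU, hD, hD]; exact hcoal⟩
    exact Nat.notMem_of_lt_sInf (hT ω ▸ (by omega : s + 1 < T ω)) hcoal'
  calc ∫⁻ ω, (T ω : ℝ≥0∞) ∂ℙ ≤ ∑' t, ℙ {ω | Vervaat.Survives x0 β t (ξ · ω)} :=
        lintegral_natCast_le_tsum_measure (ae_of_all _ hsurv)
    _ ≤ ∫⁻ ω, Vervaat.weight x0 β 0 (ξ · ω) ∂ℙ :=
        Vervaat.tsum_measure_survives_le hβ.le hx0' hξm hξi hξd
    _ ≤ _ := Vervaat.lintegral_weight_zero_le (by omega) (hξm 2) (hξd 2)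
end

section
/- For 0 < β ≤ ln(3/2)/ln 3, the expected coalescence time satisfies (E[T(β)] - 1)/β > E[(1 - (D_{-1}+1)^{-β})/β], and consequently liminf_{β→0} (E[T(β)]-1)/β ≥ c where c = ∑_{i=1}^∞ 2^{-i} ln(i+1) = E[ln(D_{-1}+1)]. -/
set_option linter.unusedSectionVars false
set_option linter.unusedVariables false
set_option maxHeartbeats 1000000

open MeasureTheory ProbabilityTheory Filter Topology



lemma two_rpow_lt_one {β : ℝ} (hβ : 0 < β) : (2:ℝ)^(-β) < 1 :=
  Real.rpow_lt_one_of_one_lt_of_neg one_lt_two (neg_lt_zero.2 hβ)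

lemma z_facts {β x : ℝ} (hβ : 0 < β) (hx : 2 ≤ x) :
    1 - (2:ℝ)^(-β) ≤ 1 - x^(-β) ∧ 0 ≤ 1 - x^(-β) ∧ 1 - x^(-β) < 1 := by
  have hx0 : (0:ℝ) < x := by linarith
  have h1 : 0 < x^(-β) := Real.rpow_pos_of_pos hx0 _
  have h2 : x^(-β) < 1 := Real.rpow_lt_one_of_one_lt_of_neg (by linarith) (neg_lt_zero.2 hβ)
  have h3 : x^(-β) ≤ (2:ℝ)^(-β) := by
    rw [Real.rpow_neg hx0.le, Real.rpow_neg (by norm_num : (0:ℝ) ≤ 2)]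
    exact inv_anti₀ (Real.rpow_pos_of_pos (by norm_num) _)
      (Real.rpow_le_rpow (by norm_num) hx hβ.le)
  exact ⟨by linarith, by linarith, by linarith⟩

lemma one_sub_rpow_le {β x : ℝ} (hβ : 0 < β) (hx : 2 ≤ x) :
    1 - x^(-β) ≤ β * Real.log x := by
  have hx0 : (0:ℝ) < x := by linarith
  have hdef : x^(-β) = Real.exp (-(β * Real.log x)) := by
    rw [Real.rpow_def_of_pos hx0]; ring_nf
  have := Real.add_one_le_exp (-(β * Real.log x))
  have h2 := Real.exp_pos (-(β * Real.log x))
  rw [hdef]; linarith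

lemma one_sub_rpow_ge {β x : ℝ} (hβ : 0 < β) (hx : 2 ≤ x) :
    β * Real.log x - (β * Real.log x)^2 ≤ 1 - x^(-β) := by
  have hx0 : (0:ℝ) < x := by linarith
  set t := β * Real.log x with ht
  have htn : 0 ≤ t := mul_nonneg hβ.le (Real.log_nonneg (by linarith))
  have hdef : x^(-β) = Real.exp (-t) := by
    rw [Real.rpow_def_of_pos hx0]; ring_nf; rw [ht]; ring_nf
  have hkey : Real.exp (-t) * (1 + t) ≤ 1 := by
    have h1 : t + 1 ≤ Real.exp t := Real.add_one_le_exp t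
    have h2 : Real.exp (-t) = (Real.exp t)⁻¹ := Real.exp_neg t
    have h3 : (0:ℝ) < Real.exp t := Real.exp_pos t
    rw [h2]
    rw [inv_mul_le_iff₀ h3, mul_one]
    linarith
  have h4 := Real.exp_pos (-t)
  rw [hdef]
  nlinarith [sq_nonneg t, mul_nonneg htn (mul_nonneg htn htn)]

lemma geo_partial {x : ℝ} (h0 : 0 ≤ x) (h1 : x < 1) (T : ℕ) :
    ∑ t ∈ Finset.range T, ((t:ℝ)+1) * x^(t+1) ≤ x / (1-x)^2 := by
  have hs : Summable (fun n : ℕ => (n:ℝ) * x^n) := by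
    have := summable_pow_mul_geometric_of_norm_lt_one (R := ℝ) 1
      (r := x) (by rw [Real.norm_eq_abs, abs_of_nonneg h0]; exact h1)
    simpa using this
  have ht : ∑' n : ℕ, (n:ℝ) * x^n = x / (1-x)^2 :=
    tsum_coe_mul_geometric_of_norm_lt_one (by rw [Real.norm_eq_abs, abs_of_nonneg h0]; exact h1)
  rw [← ht]
  calc ∑ t ∈ Finset.range T, ((t:ℝ)+1) * x^(t+1)
      = ∑ t ∈ Finset.range T, (((t+1:ℕ)):ℝ) * x^(t+1) := by
        exact Finset.sum_congr rfl fun t _ => by push_cast; ring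
    _ ≤ ∑ n ∈ Finset.range (T+1), (n:ℝ) * x^n := by
        rw [Finset.sum_range_succ']
        simp
    _ ≤ ∑' n : ℕ, (n:ℝ) * x^n :=
        Summable.sum_le_tsum _ (fun n _ => mul_nonneg (by positivity) (by positivity)) hs

lemma per_i_bound {β y : ℝ} (hβ : 0 < β) (hβ2 : β + β ≤ 1) (hy : 2 ≤ y) (T : ℕ) :
    ∑ t ∈ Finset.range T, ((t:ℝ)+1) * (1 - y^(-β))^(t+1) ≤ β * y^2 := by
  have hy0 : (0:ℝ) < y := by linarith
  obtain ⟨-, hz0, hz1⟩ := z_facts hβ hy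
  have hstep := geo_partial hz0 hz1 T
  have hvy : 1 - (1 - y^(-β)) = (y^β)⁻¹ := by
    rw [sub_sub_cancel, Real.rpow_neg hy0.le]
  have hyb : (0:ℝ) < y^β := Real.rpow_pos_of_pos hy0 _
  have hq : y^β * y^β ≤ y := by
    rw [← Real.rpow_add hy0]
    calc y^(β+β) ≤ y^(1:ℝ) := Real.rpow_le_rpow_of_exponent_le (by linarith) hβ2
      _ = y := Real.rpow_one y
  have hlog : 1 - y^(-β) ≤ β * Real.log y := one_sub_rpow_le hβ hy
  have hlogy : Real.log y ≤ y := (Real.log_le_sub_one_of_pos hy0).trans (by linarith)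
  have hlogn : 0 ≤ Real.log y := Real.log_nonneg (by linarith)
  have hdiv : (1 - y^(-β)) / (1 - (1 - y^(-β)))^2 = (1 - y^(-β)) * (y^β * y^β) := by
    rw [hvy, div_eq_mul_inv, sq, ← mul_inv, inv_inv]
  calc ∑ t ∈ Finset.range T, ((t:ℝ)+1) * (1 - y^(-β))^(t+1)
      ≤ (1 - y^(-β)) / (1 - (1 - y^(-β)))^2 := hstep
    _ = (1 - y^(-β)) * (y^β * y^β) := hdiv
    _ ≤ (β * Real.log y) * y := by
        apply mul_le_mul hlog hq (by positivity) (by positivity)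
    _ ≤ β * y^2 := by nlinarith [mul_le_mul_of_nonneg_left hlogy (mul_nonneg hβ.le hy0.le)]


section ExpTimeAux

variable {Ω : Type*} [MeasureSpace Ω] [IsProbabilityMeasure (ℙ : Measure Ω)]

lemma integrable_comp' (D : Ω → ℤ) (hD : Measurable D) (F : ℤ → ℝ)
    (hb : ∀ ω, |F (D ω)| ≤ 1) : Integrable (fun ω => F (D ω)) ℙ := by
  refine (integrable_const (1:ℝ)).mono'
    ((measurable_from_top.comp hD).aestronglyMeasurable) ?_
  exact ae_of_all _ fun ω => by simpa [Real.norm_eq_abs] using hb ω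

lemma sum_geom_aux (N : ℕ) : ∑ i ∈ Finset.range N, ((1:ℝ)/2)^(i+1) = 1 - (1/2)^N := by
  induction N with
  | zero => simp
  | succ n ih => rw [Finset.sum_range_succ, ih]; ring

lemma event_meas (D : Ω → ℤ) (hD : Measurable D) (c : ℤ) :
    MeasurableSet {ω | D ω = c} := hD (measurableSet_singleton c)

lemma event_prob (D : Ω → ℤ)
    (hDd : ∀ g : ℕ, 1 ≤ g → ℙ {ω | D ω = (g:ℤ)} = ENNReal.ofReal ((1/2:ℝ)^g)) (i : ℕ) :
    ℙ {ω | D ω = (i:ℤ)+1} = ENNReal.ofReal ((1/2:ℝ)^(i+1)) := by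
  have h := hDd (i+1) (Nat.le_add_left 1 i)
  have hc : (((i+1:ℕ)):ℤ) = (i:ℤ)+1 := by push_cast; ring
  rwa [hc] at h

lemma integral_comp_le (D : Ω → ℤ) (hD : Measurable D) (hD1 : ∀ ω, 1 ≤ D ω)
    (hDd : ∀ g : ℕ, 1 ≤ g → ℙ {ω | D ω = (g:ℤ)} = ENNReal.ofReal ((1/2:ℝ)^g))
    (F : ℤ → ℝ) (hF0 : ∀ k : ℤ, 1 ≤ k → 0 ≤ F k) (hF1 : ∀ k : ℤ, 1 ≤ k → F k ≤ 1) :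
    ∫ ω, F (D ω) ∂ℙ ≤ ∑' i : ℕ, (1/2:ℝ)^(i+1) * F ((i:ℤ)+1) := by
  have hb : ∀ ω, |F (D ω)| ≤ 1 := fun ω =>
    abs_le.2 ⟨by linarith [hF0 _ (hD1 ω)], hF1 _ (hD1 ω)⟩
  have hInt : Integrable (fun ω => F (D ω)) ℙ := integrable_comp' D hD F hb
  have hS : Summable (fun i : ℕ => (1/2:ℝ)^(i+1) * F ((i:ℤ)+1)) := by
    refine Summable.of_nonneg_of_le (fun i => ?_) (fun i => ?_)
      (((summable_geometric_of_lt_one (by norm_num) (by norm_num : (1/2:ℝ) < 1))).mul_left (1/2))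
    · exact mul_nonneg (by positivity) (hF0 _ (by omega))
    · calc (1/2:ℝ)^(i+1) * F ((i:ℤ)+1) ≤ (1/2:ℝ)^(i+1) * 1 :=
          mul_le_mul_of_nonneg_left (hF1 _ (by omega)) (by positivity)
        _ = 1/2 * (1/2:ℝ)^i := by ring
  have key : ∀ N : ℕ, ∫ ω, F (D ω) ∂ℙ ≤
      (∑ i ∈ Finset.range N, (1/2:ℝ)^(i+1) * F ((i:ℤ)+1)) + (1/2)^N := by
    intro N
    set E : ℕ → Set Ω := fun i => {ω | D ω = (i:ℤ)+1} with hE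
    have hEm : ∀ i, MeasurableSet (E i) := fun i => event_meas D hD _
    have hdisj : ((Finset.range N : Finset ℕ) : Set ℕ).Pairwise (Function.onFun Disjoint E) := by
      intro i _ j _ hij
      refine Set.disjoint_left.2 fun ω h1 h2 => hij ?_
      have : (i:ℤ)+1 = (j:ℤ)+1 := by rw [← h1, ← h2]
      exact_mod_cast (by omega : (i:ℤ) = j)
    set A : Set Ω := ⋃ i ∈ Finset.range N, E i with hA
    have hAm : MeasurableSet A := (Finset.range N).measurableSet_biUnion (fun i _ => hEm i)
    have hsplit : ∫ ω in A, F (D ω) ∂ℙ + ∫ ω in Aᶜ, F (D ω) ∂ℙ = ∫ ω, F (D ω) ∂ℙ :=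
      integral_add_compl hAm hInt
    have hPA : ℙ A = ENNReal.ofReal (1 - (1/2:ℝ)^N) := by
      rw [hA, measure_biUnion_finset hdisj (fun i _ => hEm i),
        Finset.sum_congr rfl (fun i _ => event_prob D hDd i),
        ← ENNReal.ofReal_sum_of_nonneg (fun i _ => by positivity), sum_geom_aux N]
    have hPAc : (ℙ Aᶜ).toReal = (1/2:ℝ)^N := by
      have hq : (0:ℝ) ≤ 1 - (1/2:ℝ)^N :=
        sub_nonneg.2 (pow_le_one₀ (by norm_num) (by norm_num))
      rw [prob_compl_eq_one_sub hAm, hPA, ← ENNReal.ofReal_one,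
        ← ENNReal.ofReal_sub _ hq, sub_sub_cancel,
        ENNReal.toReal_ofReal (by positivity)]
    have hIA : ∫ ω in A, F (D ω) ∂ℙ = ∑ i ∈ Finset.range N, (1/2:ℝ)^(i+1) * F ((i:ℤ)+1) := by
      rw [hA, integral_biUnion_finset (Finset.range N) (fun i _ => hEm i) hdisj
        (fun i _ => hInt.integrableOn)]
      refine Finset.sum_congr rfl fun i _ => ?_
      rw [setIntegral_congr_fun (hEm i) (fun ω hω => by
        show F (D ω) = F ((i:ℤ)+1); rw [Set.mem_setOf_eq.mp hω]),
        setIntegral_const, measureReal_def, event_prob D hDd i, ENNReal.toReal_ofReal (by positivity),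
        smul_eq_mul]
    have hIAc : ∫ ω in Aᶜ, F (D ω) ∂ℙ ≤ (1/2:ℝ)^N := by
      calc ∫ ω in Aᶜ, F (D ω) ∂ℙ ≤ ∫ _ω in Aᶜ, (1:ℝ) ∂ℙ :=
            setIntegral_mono hInt.integrableOn (integrable_const 1).integrableOn
              (fun ω => hF1 _ (hD1 ω))
        _ = (ℙ Aᶜ).toReal := by rw [setIntegral_const, smul_eq_mul, mul_one, measureReal_def]
        _ = (1/2:ℝ)^N := hPAc
    linarith [hsplit, hIA, hIAc]
  have hten : Tendsto (fun N : ℕ => (∑' i : ℕ, (1/2:ℝ)^(i+1) * F ((i:ℤ)+1)) + (1/2:ℝ)^N)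
      atTop (nhds ((∑' i : ℕ, (1/2:ℝ)^(i+1) * F ((i:ℤ)+1)) + 0)) :=
    tendsto_const_nhds.add (tendsto_pow_atTop_nhds_zero_of_lt_one (by norm_num) (by norm_num))
  have := ge_of_tendsto' hten (fun N => by
    calc ∫ ω, F (D ω) ∂ℙ ≤ (∑ i ∈ Finset.range N, (1/2:ℝ)^(i+1) * F ((i:ℤ)+1)) + (1/2)^N :=
          key N
      _ ≤ (∑' i : ℕ, (1/2:ℝ)^(i+1) * F ((i:ℤ)+1)) + (1/2:ℝ)^N := by
          gcongr
          exact Summable.sum_le_tsum _ (fun i _ => mul_nonneg (by positivity) (hF0 _ (by omega))) hS)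
  simpa using this

lemma sum_le_integral_comp (D : Ω → ℤ) (hD : Measurable D) (hD1 : ∀ ω, 1 ≤ D ω)
    (hDd : ∀ g : ℕ, 1 ≤ g → ℙ {ω | D ω = (g:ℤ)} = ENNReal.ofReal ((1/2:ℝ)^g))
    (F : ℤ → ℝ) (hF0 : ∀ k : ℤ, 1 ≤ k → 0 ≤ F k) (hF1 : ∀ k : ℤ, 1 ≤ k → F k ≤ 1) (N : ℕ) :
    ∑ i ∈ Finset.range N, (1/2:ℝ)^(i+1) * F ((i:ℤ)+1) ≤ ∫ ω, F (D ω) ∂ℙ := by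
  have hb : ∀ ω, |F (D ω)| ≤ 1 := fun ω =>
    abs_le.2 ⟨by linarith [hF0 _ (hD1 ω)], hF1 _ (hD1 ω)⟩
  have hInt : Integrable (fun ω => F (D ω)) ℙ := integrable_comp' D hD F hb
  set E : ℕ → Set Ω := fun i => {ω | D ω = (i:ℤ)+1} with hE
  have hEm : ∀ i, MeasurableSet (E i) := fun i => event_meas D hD _
  have hdisj : ((Finset.range N : Finset ℕ) : Set ℕ).Pairwise (Function.onFun Disjoint E) := by
    intro i _ j _ hij
    refine Set.disjoint_left.2 fun ω h1 h2 => hij ?_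
    have : (i:ℤ)+1 = (j:ℤ)+1 := by rw [← h1, ← h2]
    exact_mod_cast (by omega : (i:ℤ) = j)
  have hIA : ∫ ω in ⋃ i ∈ Finset.range N, E i, F (D ω) ∂ℙ
      = ∑ i ∈ Finset.range N, (1/2:ℝ)^(i+1) * F ((i:ℤ)+1) := by
    rw [integral_biUnion_finset (Finset.range N) (fun i _ => hEm i) hdisj
      (fun i _ => hInt.integrableOn)]
    refine Finset.sum_congr rfl fun i _ => ?_
    rw [setIntegral_congr_fun (hEm i) (fun ω hω => by
      show F (D ω) = F ((i:ℤ)+1); rw [Set.mem_setOf_eq.mp hω]),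
      setIntegral_const, measureReal_def, event_prob D hDd i, ENNReal.toReal_ofReal (by positivity),
      smul_eq_mul]
  rw [← hIA]
  exact setIntegral_le_integral hInt (ae_of_all _ (fun ω => hF0 _ (hD1 ω)))

end ExpTimeAux


noncomputable def C2 : ℝ := ∑' i : ℕ, (1/2:ℝ)^(i+1) * ((i:ℝ)+2)^2

lemma C2_summable : Summable (fun i : ℕ => (1/2:ℝ)^(i+1) * ((i:ℝ)+2)^2) := by
  have h := summable_pow_mul_geometric_of_norm_lt_one (R := ℝ) 2
    (r := 1/2) (by rw [Real.norm_eq_abs, abs_of_nonneg (by norm_num : (0:ℝ) ≤ 1/2)]; norm_num)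
  have h2 := (summable_nat_add_iff (f := fun n : ℕ => ((n:ℝ))^2 * (1/2:ℝ)^n) 2).2 h
  exact (h2.mul_left 2).congr (fun i => by push_cast; ring)

lemma hkb : ∀ k : ℤ, 1 ≤ k → (2:ℝ) ≤ (k:ℝ)+1 := by
  intro k hk
  have : (1:ℝ) ≤ (k:ℝ) := by exact_mod_cast hk
  linarith

lemma hy2 : ∀ i : ℕ, (2:ℝ) ≤ (i:ℝ)+2 := by
  intro i
  have : (0:ℝ) ≤ (i:ℝ) := Nat.cast_nonneg i
  linarith


lemma core_lemma {Ω : Type*} [MeasureSpace Ω] [IsProbabilityMeasure (ℙ : Measure Ω)]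
    (D : ℕ → Ω → ℤ) (hDm : ∀ s, Measurable (D s)) (hD1 : ∀ s ω, 1 ≤ D s ω)
    (hDd : ∀ (s : ℕ) (g : ℕ), 1 ≤ g →
      ℙ {ω | D s ω = (g : ℤ)} = ENNReal.ofReal ((1/2 : ℝ) ^ g))
    {β : ℝ} (hβ : 0 < β) (hβ2 : β + β ≤ 1) :
    Summable (fun t : ℕ => ∫ ω, ∏ s ∈ Finset.range (t + 1), (1 - ((D s ω : ℝ) + 1) ^ (-β)) ∂ℙ)
    ∧ (∑' t : ℕ, ∫ ω, ∏ s ∈ Finset.range (t + 1), (1 - ((D s ω : ℝ) + 1) ^ (-β)) ∂ℙ) ≤ β * C2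
    ∧ (∫ ω, (1 - ((D 0 ω : ℝ) + 1) ^ (-β)) ∂ℙ)
        < ∑' t : ℕ, ∫ ω, ∏ s ∈ Finset.range (t + 1), (1 - ((D s ω : ℝ) + 1) ^ (-β)) ∂ℙ
    ∧ ∀ N : ℕ, ∑ i ∈ Finset.range N, (1/2:ℝ)^(i+1) * (1 - ((i:ℝ)+2)^(-β))
        ≤ ∫ ω, (1 - ((D 0 ω : ℝ) + 1) ^ (-β)) ∂ℙ := by
  set a : ℕ → ℝ :=
    fun t => ∫ ω, ∏ s ∈ Finset.range (t + 1), (1 - ((D s ω : ℝ) + 1) ^ (-β)) ∂ℙ with ha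
  have hbase : ∀ s (ω : Ω), (2:ℝ) ≤ (D s ω : ℝ) + 1 := by
    intro s ω
    have : (1:ℝ) ≤ (D s ω : ℝ) := by exact_mod_cast hD1 s ω
    linarith
  have hz0 : ∀ s (ω:Ω), 0 ≤ 1 - ((D s ω : ℝ)+1)^(-β) := fun s ω => (z_facts hβ (hbase s ω)).2.1
  have hz1 : ∀ s (ω:Ω), 1 - ((D s ω : ℝ)+1)^(-β) ≤ 1 := fun s ω => (z_facts hβ (hbase s ω)).2.2.le
  have hzl : ∀ s (ω:Ω), 1 - (2:ℝ)^(-β) ≤ 1 - ((D s ω : ℝ)+1)^(-β) :=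
    fun s ω => (z_facts hβ (hbase s ω)).1
  have hxf : ∀ i:ℕ, 0 ≤ 1 - ((i:ℝ)+2)^(-β) ∧ 1 - ((i:ℝ)+2)^(-β) < 1 := fun i =>
    ⟨(z_facts hβ (hy2 i)).2.1, (z_facts hβ (hy2 i)).2.2⟩
  have hGeo : Summable (fun i : ℕ => (1/2:ℝ)^(i+1)) := by
    have := (summable_geometric_of_lt_one (by norm_num : (0:ℝ) ≤ 1/2)
      (by norm_num : (1/2:ℝ) < 1)).mul_left (1/2)
    exact this.congr (fun i => by ring)
  have hprodMeas : ∀ t, Measurable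
      (fun ω => ∏ s ∈ Finset.range (t+1), (1 - ((D s ω : ℝ)+1)^(-β))) := by
    intro t
    apply Finset.measurable_prod
    intro s _
    exact (measurable_from_top (α := ℤ) (f := fun k : ℤ => 1 - ((k:ℝ)+1)^(-β))).comp (hDm s)
  have hprodInt : ∀ t, Integrable
      (fun ω => ∏ s ∈ Finset.range (t+1), (1 - ((D s ω:ℝ)+1)^(-β))) ℙ := by
    intro t
    refine (integrable_const (1:ℝ)).mono' (hprodMeas t).aestronglyMeasurable
      (ae_of_all _ fun ω => ?_)
    rw [Real.norm_eq_abs, abs_of_nonneg (Finset.prod_nonneg fun s _ => hz0 s ω)]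
    exact Finset.prod_le_one (fun s _ => hz0 s ω) (fun s _ => hz1 s ω)
  have hsB : ∀ (t s : ℕ), (∫ ω, (1 - ((D s ω:ℝ)+1)^(-β))^(t+1) ∂ℙ)
      ≤ ∑' i : ℕ, (1/2:ℝ)^(i+1) * (1 - ((i:ℝ)+2)^(-β))^(t+1) := by
    intro t s
    have h := integral_comp_le (D s) (hDm s) (hD1 s) (hDd s)
      (fun k => (1 - ((k:ℝ)+1)^(-β))^(t+1))
      (fun k hk => pow_nonneg (z_facts hβ (hkb k hk)).2.1 _)
      (fun k hk => pow_le_one₀ (z_facts hβ (hkb k hk)).2.1 (z_facts hβ (hkb k hk)).2.2.le)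
    refine h.trans_eq (tsum_congr fun i => ?_)
    have hc : ((((i:ℤ)+1 : ℤ)):ℝ) + 1 = (i:ℝ)+2 := by push_cast; ring
    simp only [hc]
  have haB : ∀ t, a t ≤ ((t:ℝ)+1) *
      (∑' i : ℕ, (1/2:ℝ)^(i+1) * (1 - ((i:ℝ)+2)^(-β))^(t+1)) := by
    intro t
    have hIntPow : ∀ s, Integrable (fun ω => (1 - ((D s ω:ℝ)+1)^(-β))^(t+1)) ℙ := fun s =>
      integrable_comp' (D s) (hDm s) (fun k => (1 - ((k:ℝ)+1)^(-β))^(t+1)) (fun ω => by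
        rw [abs_of_nonneg (pow_nonneg (hz0 s ω) _)]
        exact pow_le_one₀ (hz0 s ω) (hz1 s ω))
    have hpt : ∀ ω : Ω, ∏ s ∈ Finset.range (t+1), (1 - ((D s ω:ℝ)+1)^(-β))
        ≤ ∑ s ∈ Finset.range (t+1), (1 - ((D s ω:ℝ)+1)^(-β))^(t+1) := by
      intro ω
      obtain ⟨s₀, hs₀, hmax⟩ := Finset.exists_max_image (Finset.range (t+1))
        (fun s => 1 - ((D s ω:ℝ)+1)^(-β)) ⟨0, Finset.mem_range.2 (Nat.succ_pos t)⟩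
      calc ∏ s ∈ Finset.range (t+1), (1 - ((D s ω:ℝ)+1)^(-β))
          ≤ ∏ _s ∈ Finset.range (t+1), (1 - ((D s₀ ω:ℝ)+1)^(-β)) :=
            Finset.prod_le_prod (fun s _ => hz0 s ω) (fun s hs => hmax s hs)
        _ = (1 - ((D s₀ ω:ℝ)+1)^(-β))^(t+1) := by
            rw [Finset.prod_const, Finset.card_range]
        _ ≤ ∑ s ∈ Finset.range (t+1), (1 - ((D s ω:ℝ)+1)^(-β))^(t+1) :=
            Finset.single_le_sum (fun s _ => pow_nonneg (hz0 s ω) _) hs₀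
    calc a t ≤ ∫ ω, ∑ s ∈ Finset.range (t+1), (1 - ((D s ω:ℝ)+1)^(-β))^(t+1) ∂ℙ :=
          integral_mono (hprodInt t) (integrable_finset_sum _ (fun s _ => hIntPow s)) hpt
      _ = ∑ s ∈ Finset.range (t+1), ∫ ω, (1 - ((D s ω:ℝ)+1)^(-β))^(t+1) ∂ℙ :=
          integral_finset_sum _ (fun s _ => hIntPow s)
      _ ≤ ∑ _s ∈ Finset.range (t+1),
            (∑' i:ℕ, (1/2:ℝ)^(i+1)*(1-((i:ℝ)+2)^(-β))^(t+1)) :=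
          Finset.sum_le_sum (fun s _ => hsB t s)
      _ = ((t:ℝ)+1) * (∑' i:ℕ, (1/2:ℝ)^(i+1)*(1-((i:ℝ)+2)^(-β))^(t+1)) := by
          rw [Finset.sum_const, Finset.card_range, nsmul_eq_mul]; push_cast; ring
  have hpw : ∀ (T : ℕ) (i : ℕ),
      ∑ t ∈ Finset.range T, ((t:ℝ)+1)*((1/2:ℝ)^(i+1)*(1-((i:ℝ)+2)^(-β))^(t+1))
        ≤ β * ((1/2:ℝ)^(i+1)*((i:ℝ)+2)^2) := by
    intro T i
    have hre : ∑ t ∈ Finset.range T, ((t:ℝ)+1)*((1/2:ℝ)^(i+1)*(1-((i:ℝ)+2)^(-β))^(t+1))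
        = (1/2:ℝ)^(i+1) * ∑ t ∈ Finset.range T, ((t:ℝ)+1)*(1-((i:ℝ)+2)^(-β))^(t+1) := by
      rw [Finset.mul_sum]; exact Finset.sum_congr rfl fun t _ => by ring
    rw [hre]
    calc (1/2:ℝ)^(i+1) * ∑ t ∈ Finset.range T, ((t:ℝ)+1)*(1-((i:ℝ)+2)^(-β))^(t+1)
        ≤ (1/2:ℝ)^(i+1) * (β * ((i:ℝ)+2)^2) :=
          mul_le_mul_of_nonneg_left (per_i_bound hβ hβ2 (hy2 i) T) (by positivity)
      _ = β * ((1/2:ℝ)^(i+1)*((i:ℝ)+2)^2) := by ring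
  have hpartial : ∀ T : ℕ, ∑ t ∈ Finset.range T, a t ≤ β * C2 := by
    intro T
    have hBsum : ∀ t : ℕ, Summable
        (fun i:ℕ => ((t:ℝ)+1)*((1/2:ℝ)^(i+1)*(1-((i:ℝ)+2)^(-β))^(t+1))) := by
      intro t
      apply Summable.mul_left
      refine Summable.of_nonneg_of_le
        (fun i => mul_nonneg (by positivity) (pow_nonneg (hxf i).1 _)) (fun i => ?_) hGeo
      calc (1/2:ℝ)^(i+1)*(1-((i:ℝ)+2)^(-β))^(t+1) ≤ (1/2:ℝ)^(i+1)*1 :=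
            mul_le_mul_of_nonneg_left (pow_le_one₀ (hxf i).1 (hxf i).2.le) (by positivity)
        _ = (1/2:ℝ)^(i+1) := mul_one _
    calc ∑ t ∈ Finset.range T, a t
        ≤ ∑ t ∈ Finset.range T, ((t:ℝ)+1) *
            (∑' i:ℕ, (1/2:ℝ)^(i+1)*(1-((i:ℝ)+2)^(-β))^(t+1)) :=
          Finset.sum_le_sum fun t _ => haB t
      _ = ∑ t ∈ Finset.range T,
            ∑' i:ℕ, ((t:ℝ)+1)*((1/2:ℝ)^(i+1)*(1-((i:ℝ)+2)^(-β))^(t+1)) :=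
          Finset.sum_congr rfl fun t _ => (tsum_mul_left).symm
      _ = ∑' i:ℕ, ∑ t ∈ Finset.range T,
            ((t:ℝ)+1)*((1/2:ℝ)^(i+1)*(1-((i:ℝ)+2)^(-β))^(t+1)) :=
          (Summable.tsum_finsetSum (fun t _ => hBsum t)).symm
      _ ≤ ∑' i:ℕ, β * ((1/2:ℝ)^(i+1)*((i:ℝ)+2)^2) := by
          refine Summable.tsum_le_tsum (fun i => hpw T i) ?_ (C2_summable.mul_left β)
          refine Summable.of_nonneg_of_le (fun i => Finset.sum_nonneg fun t _ =>
            mul_nonneg (by positivity) (mul_nonneg (by positivity) (pow_nonneg (hxf i).1 _)))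
            (fun i => hpw T i) (C2_summable.mul_left β)
      _ = β * C2 := by rw [C2]; exact tsum_mul_left
  have hanonneg : ∀ t, 0 ≤ a t := fun t =>
    integral_nonneg (fun ω => Finset.prod_nonneg fun s _ => hz0 s ω)
  have hsumA : Summable a := summable_of_sum_range_le hanonneg hpartial
  have htsum_le : ∑' t, a t ≤ β * C2 := Summable.tsum_le_of_sum_range_le hsumA hpartial
  have h2lt1 : 0 < 1 - (2:ℝ)^(-β) := sub_pos.2 (two_rpow_lt_one hβ)
  have halow : ∀ t, (1 - (2:ℝ)^(-β))^(t+1) ≤ a t := by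
    intro t
    have hpt : ∀ ω:Ω, (1 - (2:ℝ)^(-β))^(t+1)
        ≤ ∏ s ∈ Finset.range (t+1), (1 - ((D s ω:ℝ)+1)^(-β)) := by
      intro ω
      calc (1 - (2:ℝ)^(-β))^(t+1)
          = ∏ _s ∈ Finset.range (t+1), (1 - (2:ℝ)^(-β)) := by
            rw [Finset.prod_const, Finset.card_range]
        _ ≤ ∏ s ∈ Finset.range (t+1), (1 - ((D s ω:ℝ)+1)^(-β)) :=
            Finset.prod_le_prod (fun s _ => h2lt1.le) (fun s _ => hzl s ω)
    calc (1 - (2:ℝ)^(-β))^(t+1) = ∫ _ω, (1 - (2:ℝ)^(-β))^(t+1) ∂ℙ := by simp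
      _ ≤ a t := integral_mono (integrable_const _) (hprodInt t) hpt
  have ha0 : a 0 = ∫ ω, (1 - ((D 0 ω : ℝ)+1)^(-β)) ∂ℙ := by
    simp only [ha, zero_add, Finset.prod_range_one]
  have h1pos : 0 < a 1 := lt_of_lt_of_le (pow_pos h2lt1 2) (halow 1)
  have hshift : Summable (fun t => a (t+1)) := (summable_nat_add_iff 1).2 hsumA
  have h1le : a 1 ≤ ∑' t, a (t+1) := by
    simpa using Summable.le_tsum hshift 0 (fun j _ => hanonneg _)
  have hstrict : (∫ ω, (1 - ((D 0 ω : ℝ)+1)^(-β)) ∂ℙ) < ∑' t, a t := by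
    rw [← ha0, Summable.tsum_eq_zero_add hsumA]
    linarith
  refine ⟨hsumA, htsum_le, hstrict, ?_⟩
  intro N
  have h := sum_le_integral_comp (D 0) (hDm 0) (hD1 0) (hDd 0)
    (fun k => 1 - ((k:ℝ)+1)^(-β))
    (fun k hk => (z_facts hβ (hkb k hk)).2.1)
    (fun k hk => (z_facts hβ (hkb k hk)).2.2.le) N
  refine le_trans (le_of_eq (Finset.sum_congr rfl fun i _ => ?_)) h
  have hc : ((((i:ℤ)+1 : ℤ)):ℝ) + 1 = (i:ℝ)+2 := by push_cast; ring
  simp only [hc]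

lemma beta0_pos : 0 < Real.log (3/2) / Real.log 3 :=
  div_pos (Real.log_pos (by norm_num)) (Real.log_pos (by norm_num))

lemma beta0_le_half : Real.log (3/2) / Real.log 3 ≤ 1/2 := by
  rw [div_le_iff₀ (Real.log_pos (by norm_num))]
  have h1 : Real.log ((3/2:ℝ)^2) = 2 * Real.log (3/2) := by
    rw [Real.log_pow]; norm_num
  have h2 : ((3/2:ℝ)^2) = 9/4 := by norm_num
  have h3 : Real.log ((9/4):ℝ) ≤ Real.log 3 :=
    Real.log_le_log (by norm_num) (by norm_num)
  rw [h2] at h1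
  linarith


theorem expected_time_small_beta {Ω : Type*} [MeasureSpace Ω]
    [IsProbabilityMeasure (ℙ : Measure Ω)]
    (D : ℕ → Ω → ℤ) (hDm : ∀ s, Measurable (D s)) (hD1 : ∀ s ω, 1 ≤ D s ω)
    (hDd : ∀ (s : ℕ) (g : ℕ), 1 ≤ g →
      ℙ {ω | D s ω = (g : ℤ)} = ENNReal.ofReal ((1/2 : ℝ) ^ g))
    (ET : ℝ → ℝ)
    (hform : ∀ β : ℝ, 0 < β → β ≤ Real.log (3/2) / Real.log 3 →
      ET β = 1 + ∑' t : ℕ,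
        ∫ ω, ∏ s ∈ Finset.range (t + 1), (1 - ((D s ω : ℝ) + 1) ^ (-β)) ∂ℙ) :
    (∀ β : ℝ, 0 < β → β ≤ Real.log (3/2) / Real.log 3 →
      (∫ ω, (1 - ((D 0 ω : ℝ) + 1) ^ (-β)) / β ∂ℙ) < (ET β - 1) / β) ∧
      (∑' i : ℕ, (1/2 : ℝ) ^ (i + 1) * Real.log ((i : ℝ) + 2))
        ≤ liminf (fun β => (ET β - 1) / β) (nhdsWithin 0 (Set.Ioi 0)) := by
  constructor
  · intro β hβ hβle
    have hββ : β + β ≤ 1 := by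
      have := beta0_le_half; linarith
    obtain ⟨hsumA, hle, hstrict, hlow⟩ := core_lemma D hDm hD1 hDd hβ hββ
    rw [hform β hβ hβle, add_sub_cancel_left, integral_div]
    gcongr
  · -- liminf part
    have hnb : (nhdsWithin (0:ℝ) (Set.Ioi 0)).NeBot := inferInstance
    -- eventual upper bound for coboundedness
    have hub : ∀ᶠ β in nhdsWithin (0:ℝ) (Set.Ioi 0), (ET β - 1)/β ≤ C2 := by
      filter_upwards [Ioo_mem_nhdsGT_of_mem
        (⟨le_refl (0:ℝ), beta0_pos⟩ : (0:ℝ) ∈ Set.Ico 0 (Real.log (3/2) / Real.log 3))]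
        with β hβmem
      obtain ⟨hβ, hβlt⟩ := hβmem
      have hββ : β + β ≤ 1 := by have := beta0_le_half; linarith
      obtain ⟨hsumA, hle, -, -⟩ := core_lemma D hDm hD1 hDd hβ hββ
      rw [hform β hβ hβlt.le, add_sub_cancel_left]
      calc (∑' t : ℕ, ∫ ω, ∏ s ∈ Finset.range (t + 1),
              (1 - ((D s ω : ℝ) + 1) ^ (-β)) ∂ℙ) / β ≤ (β * C2)/β := by
            gcongr
        _ = C2 := by field_simp
    have hcob : IsCoboundedUnder (· ≥ ·) (nhdsWithin (0:ℝ) (Set.Ioi 0))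
        (fun β => (ET β - 1)/β) := by
      apply Filter.IsBoundedUnder.isCoboundedUnder_ge
      exact ⟨C2, eventually_map.2 hub⟩
    -- summability of the goal series
    have hgs : Summable (fun i : ℕ => (1/2 : ℝ) ^ (i + 1) * Real.log ((i : ℝ) + 2)) := by
      refine Summable.of_nonneg_of_le (fun i => mul_nonneg (by positivity)
        (Real.log_nonneg (by linarith [hy2 i]))) (fun i => ?_) C2_summable
      have h1 : Real.log ((i:ℝ)+2) ≤ ((i:ℝ)+2)^2 := by
        have h2 := Real.log_le_sub_one_of_pos (by linarith [hy2 i] : (0:ℝ) < (i:ℝ)+2)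
        nlinarith [hy2 i]
      exact mul_le_mul_of_nonneg_left h1 (by positivity)
    refine Summable.tsum_le_of_sum_range_le hgs ?_
    intro n
    set S := ∑ i ∈ Finset.range n, (1/2:ℝ)^(i+1) * Real.log ((i:ℝ)+2) with hS
    refine le_of_forall_pos_le_add ?_
    intro ε hε
    have key : S - ε ≤ liminf (fun β => (ET β - 1) / β) (nhdsWithin 0 (Set.Ioi 0)) := by
      apply Filter.le_liminf_of_le hcob
      set Q := ∑ i ∈ Finset.range n, (1/2:ℝ)^(i+1) * (Real.log ((i:ℝ)+2))^2 with hQ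
      have hQ0 : 0 ≤ Q := Finset.sum_nonneg fun i _ => mul_nonneg (by positivity) (sq_nonneg _)
      set δ := min (Real.log (3/2) / Real.log 3) (ε/(Q+1)) with hδ
      have hδpos : 0 < δ := lt_min beta0_pos (div_pos hε (by linarith))
      filter_upwards [Ioo_mem_nhdsGT_of_mem (⟨le_refl (0:ℝ), hδpos⟩ : (0:ℝ) ∈ Set.Ico 0 δ)]
        with β hβmem
      obtain ⟨hβ, hβlt⟩ := hβmem
      have hβle : β ≤ Real.log (3/2) / Real.log 3 := (hβlt.le).trans (min_le_left _ _)
      have hββ : β + β ≤ 1 := by have := beta0_le_half; linarith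
      obtain ⟨hsumA, -, hstrict, hlowN⟩ := core_lemma D hDm hD1 hDd hβ hββ
      have h1 : ∑ i ∈ Finset.range n, (1/2:ℝ)^(i+1)*(1-((i:ℝ)+2)^(-β)) ≤ ET β - 1 := by
        rw [hform β hβ hβle, add_sub_cancel_left]
        exact (hlowN n).trans hstrict.le
      have h2 : β * S - β^2 * Q
          ≤ ∑ i ∈ Finset.range n, (1/2:ℝ)^(i+1)*(1-((i:ℝ)+2)^(-β)) := by
        have hre : β*S - β^2*Q = ∑ i ∈ Finset.range n,
            ((1/2:ℝ)^(i+1) * (β*Real.log ((i:ℝ)+2) - (β*Real.log ((i:ℝ)+2))^2)) := by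
          rw [hS, hQ, Finset.mul_sum, Finset.mul_sum, ← Finset.sum_sub_distrib]
          exact Finset.sum_congr rfl fun i _ => by ring
        rw [hre]
        exact Finset.sum_le_sum fun i _ =>
          mul_le_mul_of_nonneg_left (one_sub_rpow_ge hβ (hy2 i)) (by positivity)
      have h4 : S - β*Q ≤ (ET β - 1)/β := by
        rw [le_div_iff₀ hβ]
        calc (S - β*Q)*β = β*S - β^2*Q := by ring
          _ ≤ ET β - 1 := h2.trans h1
      have h3 : S - ε ≤ S - β*Q := by
        have hβδ : β < ε/(Q+1) := lt_of_lt_of_le hβlt (min_le_right _ _)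
        have hlt : β*(Q+1) < ε := (lt_div_iff₀ (by linarith : (0:ℝ) < Q+1)).1 hβδ
        nlinarith
      exact h3.trans h4
    linarith
end
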